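/- Let H be a conilpotent bialgebra over a field k of characteristic 0 and (A, p₊) an idempotent Rota–Baxter algebra of weight −1. For φ ∈ U(H, A), define φ₋ := j₋ ⊙ φ and φ₊ := j₊ ⊙ φ, where (j₊, j₋) is the Birkhoff decomposition of the universal element j, given by j₊(a_1…a_r) = (−1)^{r−1} p₊(p₋(…(p₋(a_1)·a_2)…·a_{r−1})·a_r) and j₋(a_1…a_r) = (−1)^{r} p₋(p₋(…(p₋(a_1)·a_2)…·a_{r−1})·a_r). Then φ₋ * φ = φ₊, with φ₊ ∈ U(H, A₊) and φ₋ ∈ U(H, A₋); that is, (φ₊, φ₋) is the (unique) Birkhoff decomposition of φ. -/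

import Mathlib

open scoped TensorProduct
open TensorProduct

noncomputable section

namespace QShPaper

variable (k : Type*) [Field k]

/-! ### Convolution algebra of linear maps from a coalgebra to an algebra -/

section Conv

variable {Q : Type*} [AddCommGroup Q] [Module k Q]
variable (A : Type*) [Ring A] [Algebra k A]

/-- The convolution product `f * g := m_A ∘ (f ⊗ g) ∘ Δ` associated to a
comultiplication `com` on `Q`. -/
def conv (com : Q →ₗ[k] Q ⊗[k] Q) (f g : Q →ₗ[k] A) : Q →ₗ[k] A :=
  LinearMap.mul' k A ∘ₗ TensorProduct.map f g ∘ₗ com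

/-- The unit `u_A ∘ η` of the convolution product. -/
def convUnit (cou : Q →ₗ[k] k) : Q →ₗ[k] A := Algebra.linearMap k A ∘ₗ cou

/-- Convolution powers `f^{*n}`, with `f^{*0}` the convolution unit. -/
def convPow (com : Q →ₗ[k] Q ⊗[k] Q) (cou : Q →ₗ[k] k) (f : Q →ₗ[k] A) : ℕ → (Q →ₗ[k] A)
  | 0 => convUnit k A cou
  | n + 1 => conv k A com f (convPow com cou f n)

end Conv

/-! ### Iterated (reduced) coproducts, conilpotency -/

section Red

variable {Q : Type*} [AddCommGroup Q] [Module k Q]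

/-- `Q ≃ Q^{⊗1}`. -/
def toPow1 : Q ≃ₗ[k] ⨂[k]^1 Q := (PiTensorProduct.subsingletonEquiv (R := k) (s := fun _ : Fin 1 => Q) (0 : Fin 1)).symm

variable (one : Q) (com : Q →ₗ[k] Q ⊗[k] Q)

/-- The reduced coproduct `Δ'(h) := Δ(h) − 1 ⊗ h − h ⊗ 1`. -/
def redComul : Q →ₗ[k] Q ⊗[k] Q :=
  com - TensorProduct.mk k Q Q one - (TensorProduct.mk k Q Q).flip one

/-- Iterated reduced coproducts: `redIter n = Δ'^{[n+1]} : Q → Q^{⊗(n+1)}`,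
with `Δ'^{[1]} = Id` and `Δ'^{[n+1]} = (Id ⊗ Δ'^{[n]}) ∘ Δ'`. -/
def redIter : (n : ℕ) → Q →ₗ[k] ⨂[k]^(n+1) Q
  | 0 => (toPow1 k).toLinearMap
  | n + 1 =>
      (TensorPower.cast k Q (show 1 + (n+1) = n+1+1 by omega)).toLinearMap ∘ₗ
        (TensorPower.mulEquiv (R := k) (M := Q) (n := 1) (m := n+1)).toLinearMap ∘ₗ
          TensorProduct.map (toPow1 k).toLinearMap (redIter n) ∘ₗ redComul k one com

/-- Iterated coproducts: `fullIter n = Δ^{[n+1]} : Q → Q^{⊗(n+1)}`,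
with `Δ^{[1]} = Id` and `Δ^{[n+1]} = (Id ⊗ Δ^{[n]}) ∘ Δ`. -/
def fullIter : (n : ℕ) → Q →ₗ[k] ⨂[k]^(n+1) Q
  | 0 => (toPow1 k).toLinearMap
  | n + 1 =>
      (TensorPower.cast k Q (show 1 + (n+1) = n+1+1 by omega)).toLinearMap ∘ₗ
        (TensorPower.mulEquiv (R := k) (M := Q) (n := 1) (m := n+1)).toLinearMap ∘ₗ
          TensorProduct.map (toPow1 k).toLinearMap (fullIter n) ∘ₗ com

/-- A (coaugmented) coalgebra is (locally) conilpotent if every element of the kernel of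
the counit. is annihilated by some iterated reduced coproduct. -/
def IsConilpotent (cou : Q →ₗ[k] k) : Prop :=
  ∀ x ∈ LinearMap.ker cou, ∃ n, redIter k one com n x = 0

end Red

/-- `m_A^{[n]} ∘ f^{⊗n} : H^{⊗n} → A`. -/
def prodPow {H : Type*} [AddCommGroup H] [Module k H] (A : Type*) [Ring A] [Algebra k A]
    (f : H →ₗ[k] A) (n : ℕ) : (⨂[k]^n H) →ₗ[k] A :=
  PiTensorProduct.lift ((MultilinearMap.mkPiAlgebraFin k n A).compLinearMap fun _ => f)


/-- A model of the quasi-shuffle Hopf algebra `QSh(A) = ⊕_{n≥0} A^{⊗n}` over a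
(possibly non-unital) associative algebra `A`: `emp` is the empty word, `cons` is
prepending of a letter, `mul` is the quasi-shuffle product `⧢`, `comul` the
deconcatenation coproduct and `counit` the counit. -/
structure QShModel (A Q : Type*) [NonUnitalRing A] [Module k A]
    [SMulCommClass k A A] [IsScalarTower k A A] [AddCommGroup Q] [Module k Q] where
  emp : Q
  cons : A →ₗ[k] Q →ₗ[k] Q
  mul : Q →ₗ[k] Q →ₗ[k] Q
  comul : Q →ₗ[k] Q ⊗[k] Q
  counit : Q →ₗ[k] k
  /-- words span `QSh(A)` -/
  span_words : Submodule.span k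
    (Set.range fun w : List A => w.foldr (fun a u => cons a u) emp) = ⊤
  /-- `QSh(A) ≅ k ⊕ (A ⊗ QSh(A))` via `(c, a ⊗ u) ↦ c • 1 + a·u` -/
  theta_bij : Function.Bijective
    ((LinearMap.toSpanSingleton k Q emp).coprod (TensorProduct.lift cons))
  mul_emp_left : ∀ u, mul emp u = u
  mul_emp_right : ∀ u, mul u emp = u
  /-- the quasi-shuffle recursion `av ⧢ bw = a(v ⧢ bw) + b(av ⧢ w) + (a·_A b)(v ⧢ w)` -/
  mul_cons : ∀ (a b : A) (v w : Q),
    mul (cons a v) (cons b w) =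
      cons a (mul v (cons b w)) + cons b (mul (cons a v) w) + cons (a * b) (mul v w)
  comul_emp : comul emp = emp ⊗ₜ[k] emp
  /-- the deconcatenation recursion -/
  comul_cons : ∀ (a : A) (u : Q),
    comul (cons a u) = emp ⊗ₜ[k] (cons a u) + (TensorProduct.map (cons a) LinearMap.id) (comul u)
  counit_emp : counit emp = 1
  counit_cons : ∀ (a : A) (u : Q), counit (cons a u) = 0

namespace QShModel

variable {k}
variable {A Q : Type*} [NonUnitalRing A] [Module k A]
    [SMulCommClass k A A] [IsScalarTower k A A] [AddCommGroup Q] [Module k Q]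

/-- The word `a_1…a_n ∈ QSh(A)`. -/
def ofWord (M : QShModel k A Q) (w : List A) : Q := w.foldr (fun a u => M.cons a u) M.emp

/-- The collapse `H^{⊗(n+1)} → QSh(A)`, `x_1 ⊗ … ⊗ x_{n+1} ↦ c(x_1)…c(x_{n+1})`
(a word of length `n+1`) induced by a linear map `c : H → A`. -/
def wordMap (M : QShModel k A Q) {H : Type*} [AddCommGroup H] [Module k H]
    (c : H →ₗ[k] A) : (n : ℕ) → (⨂[k]^(n+1) H) →ₗ[k] Q
  | 0 => ((M.cons ∘ₗ c).flip M.emp) ∘ₗ (toPow1 k).symm.toLinearMap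
  | n + 1 =>
      TensorProduct.lift (M.cons ∘ₗ c) ∘ₗ
        TensorProduct.map (toPow1 k).symm.toLinearMap (M.wordMap c n) ∘ₗ
          (TensorPower.mulEquiv (R := k) (M := H) (n := 1) (m := n+1)).symm.toLinearMap ∘ₗ
            (TensorPower.cast k H (show n+1+1 = 1+(n+1) by omega)).toLinearMap

/-- `Ψ = QSh(c) ∘ ι : H → QSh(A)`, i.e. `Ψ(1) = 1` and, for `h` in the kernel of the
counit, `Ψ(h) = Σ_{n≥1} c^{⊗n}(Δ'^{[n]}(h))` (a finite sum, each term being viewed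
as a word of length `n`). -/
def IotaComp (M : QShModel k A Q) {H : Type*} [AddCommGroup H] [Module k H]
    (oneH : H) (com : H →ₗ[k] H ⊗[k] H) (cou : H →ₗ[k] k)
    (c : H →ₗ[k] A) (Ψ : H →ₗ[k] Q) : Prop :=
  Ψ oneH = M.emp ∧
    ∀ h ∈ LinearMap.ker cou, ∃ N, ∀ n ≥ N,
      Ψ h = ∑ i ∈ Finset.range (n+1), M.wordMap c i (redIter k oneH com i h)

end QShModel
end QShPaper

namespace QShPaper

/-- The distinguished element `j ∈ U(QSh(A), A)`: `j(1) = 1_A`, `j(a) = a` on letters, and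
`j` vanishes on words of length `≥ 2`. -/
def QShModel.IsJ {k : Type*} [Field k] {A Q : Type*} [Ring A] [Algebra k A]
    [AddCommGroup Q] [Module k Q] (M : QShModel k A Q) (j : Q →ₗ[k] A) : Prop :=
  j M.emp = 1 ∧ (∀ a : A, j (M.cons a M.emp) = a) ∧
    ∀ (a b : A) (u : Q), j (M.cons a (M.cons b u)) = 0

end QShPaper

namespace QShPaper

/-- The iterated Rota–Baxter expression `p₋(…(p₋(p₋(a_1)·a_2)·a_3)…·a_{r−1})·a_r`
(without the outermost `p₊`/`p₋`). -/
def rbChain' {k : Type*} [Field k] {A : Type*} [Ring A] [Algebra k A]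
    (pm : A →ₗ[k] A) (a : A) (l : List A) : A :=
  l.foldl (fun x b => pm x * b) a

end QShPaper

/-!
`Ψ = QSh(φ|_{H⁺}) ∘ ι` is a morphism of coalgebras `H → QSh(A)`: on `ker Δ'^{[n+1]}` it is the
finite sum of the terms `φ^{⊗m} ∘ Δ'^{[m]}`, whose coproducts are computed by deconcatenation and
coassociativity of `Δ'`. Since `j` only sees one-letter words, `j ∘ Ψ = φ`, hence
`φ₋ * φ = (j₋ ∘ Ψ) * (j ∘ Ψ) = (j₋ * j) ∘ Ψ = j₊ ∘ Ψ`, where `j₋ * j = j₊` is a telescoping identity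
between the word formulas. These formulas also show that `j₊` and `j₋` take values in `A₊` and `A₋`
on nonempty words, which is where `Ψ` sends `H⁺`.

Uniqueness goes by induction along the coradical filtration: if `ψ₋ * φ = ψ₊` and `χ₋ * φ = χ₊`,
then on `ker Δ'^{[n+1]}` the difference `ψ₋ - χ₋` equals `ψ₊ - χ₊` up to terms in which `ψ₋ - χ₋`
is applied to left legs of `Δ'`, which lie in `ker Δ'^{[n]}`; so it lies in `A₊ ∩ A₋ = 0`.
-/

namespace QShPaper

open LinearMap

section Flat

variable {R V W X Y : Type*} [CommRing R] [AddCommGroup V] [Module R V] [Module.Flat R V]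
  [AddCommGroup W] [Module R W] [AddCommGroup X] [Module R X] [AddCommGroup Y] [Module R Y]
  {g : W →ₗ[R] X} {f : W →ₗ[R] Y}

theorem ker_lTensor_le_ker_lTensor (hgf : ker g ≤ ker f) :
    ker (g.lTensor V) ≤ ker (f.lTensor V) := by
  intro t ht
  obtain ⟨s, rfl⟩ := (Module.Flat.lTensor_exact V g.exact_subtype_ker_map t).mp ht
  have hf : f ∘ₗ (ker g).subtype = 0 := LinearMap.ext fun w => hgf w.2
  rw [mem_ker, ← comp_apply, ← lTensor_comp, hf, lTensor_zero, LinearMap.zero_apply]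

theorem ker_rTensor_le_ker_rTensor (hgf : ker g ≤ ker f) :
    ker (g.rTensor V) ≤ ker (f.rTensor V) := by
  intro t ht
  obtain ⟨s, rfl⟩ := (Module.Flat.rTensor_exact V g.exact_subtype_ker_map t).mp ht
  have hf : f ∘ₗ (ker g).subtype = 0 := LinearMap.ext fun w => hgf w.2
  rw [mem_ker, ← comp_apply, ← rTensor_comp, hf, rTensor_zero, LinearMap.zero_apply]

end Flat

theorem sum_range_sum_range_sub_eq_sum_range_sum_range {M : Type*} [AddCommMonoid M]
    {g : ℕ → ℕ → M} {m n : ℕ} (hg : ∀ c d, m ≤ c ∨ m ≤ d → g c d = 0) (hn : 2 * m ≤ n) :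
    ∑ i ∈ Finset.range n, ∑ c ∈ Finset.range i, g c (i - 1 - c) =
      ∑ c ∈ Finset.range m, ∑ d ∈ Finset.range m, g c d := by
  have hswap : ∑ i ∈ Finset.range n, ∑ c ∈ Finset.range i, g c (i - 1 - c) =
      ∑ c ∈ Finset.range n, ∑ d ∈ Finset.range (n - (c + 1)), g c d := by
    rw [Finset.sum_comm' (t' := Finset.range n) (s' := fun c => Finset.Ico (c + 1) n)
      fun i c => by simp only [Finset.mem_range, Finset.mem_Ico]; omega]
    refine Finset.sum_congr rfl fun c _ => ?_
    rw [Finset.sum_Ico_eq_sum_range]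
    exact Finset.sum_congr rfl fun d _ => by rw [show c + 1 + d - 1 - c = d by omega]
  rw [hswap, ← Finset.sum_subset (Finset.range_subset_range.mpr (by omega : m ≤ n))
    fun c _ hc => Finset.sum_eq_zero fun d _ => hg c d (.inl (by simpa using hc))]
  refine Finset.sum_congr rfl fun c hc => ?_
  have hc : c < m := Finset.mem_range.mp hc
  exact (Finset.sum_subset (Finset.range_subset_range.mpr (by omega))
    fun d _ hd => hg c d (.inr (by simpa using hd))).symm

section Tensor

open Filter

variable {R V V' Q Q' : Type*} [CommRing R] [AddCommGroup V] [Module R V] [AddCommGroup V']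
  [Module R V'] [AddCommGroup Q] [Module R Q] [AddCommGroup Q'] [Module R Q']

theorem eventually_map_eq_sum_range_sum_range {f : V →ₗ[R] Q} {f' : V' →ₗ[R] Q'}
    {W : ℕ → V →ₗ[R] Q} {W' : ℕ → V' →ₗ[R] Q'}
    (hW : ∀ v, ∀ᶠ n in atTop, W n v = 0) (hW' : ∀ v, ∀ᶠ n in atTop, W' n v = 0)
    (hf : ∀ v, ∀ᶠ n in atTop, f v = ∑ i ∈ Finset.range n, W i v)
    (hf' : ∀ v, ∀ᶠ n in atTop, f' v = ∑ i ∈ Finset.range n, W' i v) (t : V ⊗[R] V') :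
    ∀ᶠ n in atTop, TensorProduct.map f f' t =
      ∑ i ∈ Finset.range n, ∑ c ∈ Finset.range i, TensorProduct.map (W c) (W' (i - 1 - c)) t := by
  induction t using TensorProduct.induction_on with
  | zero => simp
  | tmul v v' =>
    obtain ⟨m, hm⟩ := eventually_atTop.mp
      ((hW v).and <| (hW' v').and <| (hf v).and (hf' v'))
    have hvanish : ∀ c d, m ≤ c ∨ m ≤ d → W c v ⊗ₜ[R] W' d v' = 0 := by
      rintro c d (hc | hd)
      · rw [(hm c hc).1, TensorProduct.zero_tmul]
      · rw [(hm d hd).2.1, TensorProduct.tmul_zero]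
    filter_upwards [eventually_ge_atTop (2 * m)] with n hn
    simp only [TensorProduct.map_tmul]
    rw [sum_range_sum_range_sub_eq_sum_range_sum_range hvanish hn, (hm m le_rfl).2.2.1,
      (hm m le_rfl).2.2.2, TensorProduct.sum_tmul]
    simp_rw [TensorProduct.tmul_sum]
  | add s t hs ht =>
    filter_upwards [hs, ht] with n hs ht
    simp only [map_add, hs, ht, ← Finset.sum_add_distrib]

end Tensor

theorem conv_comp_comp {k A C D : Type*} [Field k] [Ring A] [Algebra k A] [AddCommGroup C]
    [Module k C] [AddCommGroup D] [Module k D] {comC : C →ₗ[k] C ⊗[k] C}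
    {comD : D →ₗ[k] D ⊗[k] D} {Ψ : C →ₗ[k] D}
    (hΨ : comD ∘ₗ Ψ = TensorProduct.map Ψ Ψ ∘ₗ comC) (f g : D →ₗ[k] A) :
    conv k A comC (f ∘ₗ Ψ) (g ∘ₗ Ψ) = conv k A comD f g ∘ₗ Ψ := by
  simp only [conv, TensorProduct.map_comp, LinearMap.comp_assoc, hΨ]

section Bialgebra

variable {k : Type*} [Field k] {H : Type*} [Ring H] [Bialgebra k H]

local notation "Δ" => Coalgebra.comul (R := k) (A := H)
local notation "ε" => Coalgebra.counit (R := k) (A := H)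
local notation "Δ'" => redComul k (1 : H) (Coalgebra.comul (R := k) (A := H))

theorem ext_of_apply_one {V : Type*} [AddCommGroup V] [Module k V] {f g : H →ₗ[k] V}
    (h1 : f 1 = g 1) (hker : ∀ x, ε x = 0 → f x = g x) : f = g := by
  ext x
  have hx : ε (x - ε x • 1) = 0 := by simp [Bialgebra.counit_one]
  rw [← sub_add_cancel x (ε x • 1), map_add, map_add, map_smul, map_smul, h1, hker _ hx]

theorem redComul_apply (x : H) : Δ' x = Δ x - 1 ⊗ₜ[k] x - x ⊗ₜ[k] 1 := by
  simp [redComul]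

theorem redComul_mem_range_map_subtype {x : H} (hx : ε x = 0) :
    Δ' x ∈ range (TensorProduct.map (ker ε).subtype (ker ε).subtype) := by
  let π : H →ₗ[k] ker ε := (LinearMap.id - toSpanSingleton k H 1 ∘ₗ ε).codRestrict _
    fun y => by simp [Bialgebra.counit_one]
  refine ⟨TensorProduct.map π π (Δ x), ?_⟩
  have hπ : (ker ε).subtype ∘ₗ π = LinearMap.id - toSpanSingleton k H 1 ∘ₗ ε := rfl
  have hl : rTensor H (toSpanSingleton k H 1 ∘ₗ ε) (Δ x) = 1 ⊗ₜ x := by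
    rw [rTensor_comp, comp_apply, Coalgebra.rTensor_counit_comul]; simp
  have hr : lTensor H (toSpanSingleton k H 1 ∘ₗ ε) (Δ x) = x ⊗ₜ 1 := by
    rw [lTensor_comp, comp_apply, Coalgebra.lTensor_counit_comul]; simp
  rw [← comp_apply, ← TensorProduct.map_comp, hπ, ← lTensor_comp_rTensor, comp_apply,
    rTensor_sub, lTensor_sub]
  simp only [LinearMap.sub_apply, map_sub, hl, hr, rTensor_id, lTensor_id, LinearMap.id_apply,
    lTensor_tmul, comp_apply, hx, toSpanSingleton_apply, zero_smul, tmul_zero, sub_zero,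
    redComul_apply]
  abel

theorem redComul_coassoc (x : H) :
    TensorProduct.assoc k H H H (rTensor H Δ' (Δ' x)) = lTensor H Δ' (Δ' x) := by
  have coassoc : TensorProduct.assoc k H H H (rTensor H Δ (Δ x)) = lTensor H Δ (Δ x) :=
    Coalgebra.coassoc_apply x
  have hΔ : (Δ' : H →ₗ[k] H ⊗[k] H) =
      Δ - TensorProduct.mk k H H 1 - (TensorProduct.mk k H H).flip 1 := rfl
  have hl : TensorProduct.assoc k H H H (rTensor H (TensorProduct.mk k H H 1) (Δ x)) =
      1 ⊗ₜ Δ x := by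
    induction Δ x using TensorProduct.induction_on <;> simp_all [tmul_add]
  have hr : TensorProduct.assoc k H H H (rTensor H ((TensorProduct.mk k H H).flip 1) (Δ x)) =
      lTensor H (TensorProduct.mk k H H 1) (Δ x) := by
    induction Δ x using TensorProduct.induction_on <;> simp_all
  have hr' : TensorProduct.assoc k H H H (Δ x ⊗ₜ 1) =
      lTensor H ((TensorProduct.mk k H H).flip 1) (Δ x) := by
    induction Δ x using TensorProduct.induction_on <;> simp_all [add_tmul]
  simp only [hΔ, rTensor_sub, lTensor_sub, LinearMap.sub_apply, map_sub, coassoc, hl, hr, hr',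
    TensorProduct.mk_apply, flip_apply, rTensor_tmul, lTensor_tmul, Bialgebra.comul_one,
    Algebra.TensorProduct.one_def, TensorProduct.assoc_tmul]
  abel

theorem redIter_zero_eq_zero_iff {x : H} : redIter k (1 : H) Δ 0 x = 0 ↔ x = 0 :=
  LinearEquiv.map_eq_zero_iff (toPow1 k)

theorem redIter_succ_eq_zero_iff {n : ℕ} {x : H} :
    redIter k (1 : H) Δ (n + 1) x = 0 ↔ lTensor H (redIter k (1 : H) Δ n) (Δ' x) = 0 := by
  change TensorPower.cast k H _ (TensorPower.mulEquiv
    (TensorProduct.map (toPow1 k).toLinearMap (redIter k (1 : H) Δ n) (Δ' x))) = 0 ↔ _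
  rw [LinearEquiv.map_eq_zero_iff, LinearEquiv.map_eq_zero_iff, ← rTensor_comp_lTensor,
    comp_apply, ← LinearEquiv.coe_rTensor, LinearEquiv.coe_coe, LinearEquiv.map_eq_zero_iff]

/-- `redIter` iterates `Δ'` on the right leg; coassociativity of `Δ'` carries the vanishing over
to the left leg. -/
theorem rTensor_redIter_redComul_eq_zero {n : ℕ} {x : H}
    (hx : redIter k (1 : H) Δ (n + 1) x = 0) :
    rTensor H (redIter k (1 : H) Δ n) (Δ' x) = 0 := by
  induction n generalizing x with
  | zero =>
    rw [redIter_succ_eq_zero_iff] at hx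
    rw [(LinearEquiv.map_eq_zero_iff ((toPow1 k).lTensor H)).mp hx, map_zero]
  | succ n ih =>
    rw [redIter_succ_eq_zero_iff] at hx
    have hleg : lTensor H (rTensor H (redIter k (1 : H) Δ n) ∘ₗ Δ') (Δ' x) = 0 :=
      ker_lTensor_le_ker_lTensor (fun y hy => mem_ker.mpr (ih (mem_ker.mp hy))) hx
    have hcoassoc :
        rTensor H Δ' (Δ' x) = (TensorProduct.assoc k H H H).symm (lTensor H Δ' (Δ' x)) := by
      rw [LinearEquiv.eq_symm_apply]; exact redComul_coassoc x
    change rTensor H (_ ∘ₗ _ ∘ₗ TensorProduct.map (toPow1 k).toLinearMap (redIter k (1 : H) Δ n) ∘ₗ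
      Δ') (Δ' x) = 0
    rw [← rTensor_comp_lTensor, rTensor_comp, rTensor_comp, rTensor_comp, rTensor_comp]
    simp only [comp_apply]
    have hnat : rTensor H (lTensor H (redIter k (1 : H) Δ n))
        ((TensorProduct.assoc k H H H).symm (lTensor H Δ' (Δ' x))) =
        (TensorProduct.assoc k H _ H).symm
          (lTensor H (rTensor H (redIter k (1 : H) Δ n) ∘ₗ Δ') (Δ' x)) := by
      rw [lTensor_comp, comp_apply]
      exact LinearMap.congr_fun (rTensor_lTensor_comp_assoc_symm (x := redIter k (1 : H) Δ n)) _
    rw [hcoassoc, hnat, hleg, LinearEquiv.map_zero, LinearMap.map_zero, LinearMap.map_zero,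
      LinearMap.map_zero]

variable {A : Type*} [Ring A] [Algebra k A]

theorem conv_apply_redComul (f g : H →ₗ[k] A) (x : H) :
    conv k A Δ f g x = f 1 * g x + f x * g 1 + mul' k A (TensorProduct.map f g (Δ' x)) := by
  have hΔ : Δ x = 1 ⊗ₜ x + x ⊗ₜ 1 + Δ' x := by rw [redComul_apply]; abel
  simp [conv, hΔ]

theorem birkhoff_factor_unique (hco : IsConilpotent k (1 : H) Δ ε) {p : A →ₗ[k] A}
    (hp : IsIdempotentElem p) {φ ψp ψm χp χm : H →ₗ[k] A} (hφ : φ 1 = 1) (hψm1 : ψm 1 = 1)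
    (hχm1 : χm 1 = 1) (hψp : ∀ x ∈ ker ε, ψp x ∈ range p) (hχp : ∀ x ∈ ker ε, χp x ∈ range p)
    (hψm : ∀ x ∈ ker ε, ψm x ∈ range (LinearMap.id - p))
    (hχm : ∀ x ∈ ker ε, χm x ∈ range (LinearMap.id - p))
    (hψ : conv k A Δ ψm φ = ψp) (hχ : conv k A Δ χm φ = χp) : ψm = χm := by
  refine ext_of_apply_one (hψm1.trans hχm1.symm) fun x hx => ?_
  obtain ⟨n, hn⟩ := hco x hx
  induction n generalizing x with
  | zero => rw [redIter_zero_eq_zero_iff.mp hn, map_zero, map_zero]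
  | succ n ih =>
    obtain ⟨s, hs⟩ := redComul_mem_range_map_subtype hx
    have hker : ker (redIter k (1 : H) Δ n ∘ₗ (ker ε).subtype) ≤
        ker ((ψm - χm) ∘ₗ (ker ε).subtype) :=
      fun y hy => sub_eq_zero.mpr (ih y.1 y.2 hy)
    have hlegs : rTensor H (ψm - χm) (Δ' x) = 0 := by
      rw [← hs, ← rTensor_comp_lTensor, comp_apply, ← comp_apply (rTensor H _), ← rTensor_comp]
      apply ker_rTensor_le_ker_rTensor hker
      rw [mem_ker, rTensor_comp, comp_apply, ← comp_apply (rTensor H (ker ε).subtype),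
        rTensor_comp_lTensor, hs]
      exact rTensor_redIter_redComul_eq_zero hn
    have hmap : TensorProduct.map ψm φ (Δ' x) = TensorProduct.map χm φ (Δ' x) := by
      rw [← lTensor_comp_rTensor, ← lTensor_comp_rTensor, comp_apply, comp_apply, ← sub_eq_zero,
        ← map_sub, ← LinearMap.sub_apply, ← rTensor_sub, hlegs, map_zero]
    have hdiff : ψm x - χm x = ψp x - χp x := by
      rw [← hψ, ← hχ, conv_apply_redComul, conv_apply_redComul, hmap, hψm1, hχm1, hφ, mul_one,
        mul_one]
      abel
    have hplus : ψm x - χm x ∈ range p := hdiff ▸ sub_mem (hψp x hx) (hχp x hx)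
    have hminus : ψm x - χm x ∈ ker p := hp.ker_eq_range ▸ sub_mem (hψm x hx) (hχm x hx)
    exact sub_eq_zero.mp ((hp.mem_range_iff.mp hplus).symm.trans hminus)

end Bialgebra

namespace QShModel

section Words

variable {k : Type*} [Field k] {A : Type*} [Ring A] [Algebra k A]
  {Q : Type*} [AddCommGroup Q] [Module k Q] (M : QShModel k A Q)

theorem comul_ofWord (w : List A) :
    M.comul (M.ofWord w) =
      ∑ i ∈ Finset.range (w.length + 1), M.ofWord (w.take i) ⊗ₜ[k] M.ofWord (w.drop i) := by
  induction w with
  | nil => simpa [ofWord] using M.comul_emp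
  | cons a v ih =>
    change M.comul (M.cons a (M.ofWord v)) = _
    rw [M.comul_cons, ih, map_sum, List.length_cons, Finset.sum_range_succ'
      (fun i => M.ofWord ((a :: v).take i) ⊗ₜ[k] M.ofWord ((a :: v).drop i)), add_comm]
    rfl

theorem conv_apply_ofWord (f g : Q →ₗ[k] A) (w : List A) :
    conv k A M.comul f g (M.ofWord w) =
      ∑ i ∈ Finset.range (w.length + 1), f (M.ofWord (w.take i)) * g (M.ofWord (w.drop i)) := by
  simp [conv, comul_ofWord]

variable {M} in
theorem IsJ.apply_ofWord_eq_zero {j : Q →ₗ[k] A} (hj : M.IsJ j) :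
    ∀ w : List A, 2 ≤ w.length → j (M.ofWord w) = 0
  | a :: b :: u, _ => hj.2.2 a b (M.ofWord u)

theorem conv_apply_ofWord_append_singleton {j : Q →ₗ[k] A} (hj : M.IsJ j) (f : Q →ₗ[k] A)
    (w : List A) (b : A) :
    conv k A M.comul f j (M.ofWord (w ++ [b])) = f (M.ofWord w) * b + f (M.ofWord (w ++ [b])) := by
  have hlong : ∀ i ∈ Finset.range w.length,
      f (M.ofWord ((w ++ [b]).take i)) * j (M.ofWord ((w ++ [b]).drop i)) = 0 := fun i hi => by
    rw [hj.apply_ofWord_eq_zero _ (by simp at hi ⊢; omega), mul_zero]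
  rw [conv_apply_ofWord, List.length_append, List.length_singleton, Finset.sum_range_succ,
    Finset.sum_range_succ, Finset.sum_eq_zero hlong, List.take_left' rfl, List.drop_left' rfl,
    List.take_of_length_le (by simp), List.drop_of_length_le (by simp)]
  simp [ofWord, hj.1, hj.2.1]

theorem rbChain'_append_singleton (pm : A →ₗ[k] A) (a b : A) (l : List A) :
    rbChain' pm a (l ++ [b]) = pm (rbChain' pm a l) * b := by
  simp [rbChain', List.foldl_append]

/-- In `(j₋ * j)(w b) = j₋(w) b + j₋(w b)` the two terms telescope, as `y - p₋(y) = p₊(y)`. -/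
theorem conv_eq_of_birkhoff_formulas {j jp jm : Q →ₗ[k] A} (hj : M.IsJ j) (p : A →ₗ[k] A)
    (hjp1 : jp M.emp = 1)
    (hjp : ∀ (a : A) (l : List A), jp (M.ofWord (a :: l)) =
      (-1 : k) ^ l.length • p (rbChain' ((LinearMap.id : A →ₗ[k] A) - p) a l))
    (hjm1 : jm M.emp = 1)
    (hjm : ∀ (a : A) (l : List A), jm (M.ofWord (a :: l)) = (-1 : k) ^ (l.length + 1) •
      ((LinearMap.id : A →ₗ[k] A) - p) (rbChain' ((LinearMap.id : A →ₗ[k] A) - p) a l)) :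
    conv k A M.comul jm j = jp := by
  refine LinearMap.ext_on M.span_words ?_
  rintro _ ⟨w, rfl⟩
  change conv k A M.comul jm j (M.ofWord w) = jp (M.ofWord w)
  rcases List.eq_nil_or_concat' w with rfl | ⟨v, b, rfl⟩
  · rw [conv_apply_ofWord]
    simp [ofWord, hjm1, hj.1, hjp1]
  rw [M.conv_apply_ofWord_append_singleton hj]
  rcases v with _ | ⟨a, l⟩
  · rw [List.nil_append, hjm b [], hjp b []]
    simp [rbChain', ofWord, hjm1]
  · rw [List.cons_append, hjm a l, hjm a (l ++ [b]), hjp a (l ++ [b]),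
      rbChain'_append_singleton, List.length_append, List.length_singleton, smul_mul_assoc]
    set y := ((LinearMap.id : A →ₗ[k] A) - p) (rbChain' ((LinearMap.id : A →ₗ[k] A) - p) a l) * b
    simp only [LinearMap.sub_apply, LinearMap.id_apply, pow_succ]
    module

def nonemptyWords : Submodule k Q := range (TensorProduct.lift M.cons)

theorem cons_mem_nonemptyWords (a : A) (u : Q) : M.cons a u ∈ M.nonemptyWords :=
  ⟨a ⊗ₜ u, TensorProduct.lift.tmul a u⟩

theorem map_nonemptyWords_le {V : Type*} [AddCommGroup V] [Module k V] {f : Q →ₗ[k] V}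
    {B : Submodule k V} (h : ∀ a l, f (M.ofWord (a :: l)) ∈ B) : M.nonemptyWords.map f ≤ B := by
  have hwords : Submodule.span k (Set.range M.ofWord) = ⊤ := M.span_words
  have hcons (a : A) : Submodule.span k (Set.range M.ofWord) ≤ B.comap (f ∘ₗ M.cons a) :=
    Submodule.span_le.mpr (Set.range_subset_iff.mpr (h a))
  rintro _ ⟨_, ⟨t, rfl⟩, rfl⟩
  induction t using TensorProduct.induction_on with
  | zero => simp
  | tmul a u => exact hcons a (hwords ▸ Submodule.mem_top)
  | add s t hs ht => rw [map_add, map_add]; exact B.add_mem hs ht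

variable {M} in
theorem IsJ.apply_cons_eq_zero {j : Q →ₗ[k] A} (hj : M.IsJ j) (a : A) {u : Q}
    (hu : u ∈ M.nonemptyWords) : j (M.cons a u) = 0 := by
  obtain ⟨t, rfl⟩ := hu
  induction t using TensorProduct.induction_on with
  | zero => simp
  | tmul b v => exact hj.2.2 a b v
  | add s t hs ht => rw [map_add, map_add, map_add, hs, ht, add_zero]

section Iota

variable {H : Type*} [Ring H] [Bialgebra k H]

local notation "Δ" => Coalgebra.comul (R := k) (A := H)
local notation "ε" => Coalgebra.counit (R := k) (A := H)
local notation "Δ'" => redComul k (1 : H) (Coalgebra.comul (R := k) (A := H))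

/-- The summand `c^{⊗(n+1)} ∘ Δ'^{[n+1]}` of `QSh(c) ∘ ι`. -/
def iotaTerm (c : H →ₗ[k] A) (n : ℕ) : H →ₗ[k] Q := M.wordMap c n ∘ₗ redIter k (1 : H) Δ n

theorem iotaTerm_zero_apply (c : H →ₗ[k] A) (x : H) : M.iotaTerm c 0 x = M.cons (c x) M.emp := by
  simp [iotaTerm, wordMap, redIter]

theorem iotaTerm_succ (c : H →ₗ[k] A) (n : ℕ) : M.iotaTerm c (n + 1) =
    TensorProduct.lift (M.cons ∘ₗ c) ∘ₗ lTensor H (M.iotaTerm c n) ∘ₗ Δ' := by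
  ext x
  simp only [iotaTerm, wordMap, redIter, comp_apply, LinearEquiv.coe_coe, TensorPower.cast_cast,
    TensorPower.cast_refl, LinearEquiv.refl_apply, LinearEquiv.symm_apply_apply]
  rw [← comp_apply (TensorProduct.map _ _), ← TensorProduct.map_comp, LinearEquiv.symm_comp]
  rfl

theorem iotaTerm_mem_nonemptyWords (c : H →ₗ[k] A) (n : ℕ) (x : H) :
    M.iotaTerm c n x ∈ M.nonemptyWords := by
  cases n with
  | zero => exact iotaTerm_zero_apply M c x ▸ M.cons_mem_nonemptyWords _ _
  | succ n =>
    have hlift : TensorProduct.lift (M.cons ∘ₗ c) = TensorProduct.lift M.cons ∘ₗ rTensor Q c :=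
      TensorProduct.ext' fun _ _ => rfl
    rw [iotaTerm_succ, comp_apply, hlift, comp_apply]
    exact mem_range_self _ _

variable {M} in
theorem IsJ.comp_iotaTerm_succ {j : Q →ₗ[k] A} (hj : M.IsJ j) (c : H →ₗ[k] A) (n : ℕ) :
    j ∘ₗ M.iotaTerm c (n + 1) = 0 := by
  have hzero : j ∘ₗ TensorProduct.lift (M.cons ∘ₗ c) ∘ₗ lTensor H (M.iotaTerm c n) = 0 :=
    TensorProduct.ext' fun a y => hj.apply_cons_eq_zero _ (M.iotaTerm_mem_nonemptyWords c n y)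
  rw [iotaTerm_succ, ← comp_assoc, ← comp_assoc, comp_assoc _ _ j, hzero, zero_comp]

def consLeft (c : H →ₗ[k] A) : H ⊗[k] (Q ⊗[k] Q) →ₗ[k] Q ⊗[k] Q :=
  rTensor Q (TensorProduct.lift (M.cons ∘ₗ c)) ∘ₗ (TensorProduct.assoc k H Q Q).symm.toLinearMap

theorem consLeft_tmul (c : H →ₗ[k] A) (a : H) (t : Q ⊗[k] Q) :
    M.consLeft c (a ⊗ₜ t) = TensorProduct.map (M.cons (c a)) LinearMap.id t := by
  induction t using TensorProduct.induction_on with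
  | zero => simp
  | tmul u v => simp [consLeft]
  | add s t hs ht => rw [tmul_add, map_add, map_add, hs, ht]

theorem comul_lift_cons (c : H →ₗ[k] A) (t : H ⊗[k] Q) :
    M.comul (TensorProduct.lift (M.cons ∘ₗ c) t) =
      M.emp ⊗ₜ TensorProduct.lift (M.cons ∘ₗ c) t + M.consLeft c (lTensor H M.comul t) := by
  induction t using TensorProduct.induction_on with
  | zero => simp
  | tmul a u => simp [M.comul_cons, consLeft_tmul]
  | add s t hs ht => simp only [map_add, hs, ht, tmul_add]; abel

theorem consLeft_lTensor_mk (c : H →ₗ[k] A) (X : H →ₗ[k] Q) (t : H ⊗[k] H) :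
    M.consLeft c (lTensor H (TensorProduct.mk k Q Q M.emp ∘ₗ X) t) =
      TensorProduct.map (M.iotaTerm c 0) X t := by
  induction t using TensorProduct.induction_on with
  | zero => simp
  | tmul a b => simp [consLeft_tmul, iotaTerm_zero_apply]
  | add s t hs ht => rw [map_add, map_add, hs, ht, map_add]

theorem consLeft_lTensor_flip_mk (c : H →ₗ[k] A) (X : H →ₗ[k] Q) (t : H ⊗[k] H) :
    M.consLeft c (lTensor H ((TensorProduct.mk k Q Q).flip M.emp ∘ₗ X) t) =
      TensorProduct.lift (M.cons ∘ₗ c) (lTensor H X t) ⊗ₜ M.emp := by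
  induction t using TensorProduct.induction_on with
  | zero => simp
  | tmul a b => simp [consLeft_tmul]
  | add s t hs ht => rw [map_add, map_add, hs, ht, map_add, map_add, add_tmul]

theorem consLeft_lTensor_map_redComul (c : H →ₗ[k] A) (X Y : H →ₗ[k] Q) (x : H) :
    M.consLeft c (lTensor H (TensorProduct.map X Y ∘ₗ Δ') (Δ' x)) =
      TensorProduct.map (TensorProduct.lift (M.cons ∘ₗ c) ∘ₗ lTensor H X ∘ₗ Δ') Y (Δ' x) := by
  have hnat : M.consLeft c ∘ₗ lTensor H (TensorProduct.map X Y) ∘ₗ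
      (TensorProduct.assoc k H H H).toLinearMap =
      TensorProduct.map (TensorProduct.lift (M.cons ∘ₗ c) ∘ₗ lTensor H X) Y :=
    TensorProduct.ext_threefold fun a b d => by simp [consLeft_tmul]
  have := LinearMap.congr_fun hnat (rTensor H Δ' (Δ' x))
  rw [comp_apply, comp_apply, LinearEquiv.coe_coe, redComul_coassoc] at this
  rw [lTensor_comp, comp_apply, this, map_rTensor]
  rfl

theorem comul_iotaTerm (c : H →ₗ[k] A) (n : ℕ) (x : H) :
    M.comul (M.iotaTerm c n x) = M.emp ⊗ₜ M.iotaTerm c n x + M.iotaTerm c n x ⊗ₜ M.emp +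
      ∑ i ∈ Finset.range n,
        TensorProduct.map (M.iotaTerm c i) (M.iotaTerm c (n - 1 - i)) (Δ' x) := by
  induction n generalizing x with
  | zero => simp [iotaTerm_zero_apply, M.comul_cons, M.comul_emp]
  | succ n ih =>
    have ih' : M.comul ∘ₗ M.iotaTerm c n = TensorProduct.mk k Q Q M.emp ∘ₗ M.iotaTerm c n +
        (TensorProduct.mk k Q Q).flip M.emp ∘ₗ M.iotaTerm c n +
        ∑ i ∈ Finset.range n,
          TensorProduct.map (M.iotaTerm c i) (M.iotaTerm c (n - 1 - i)) ∘ₗ Δ' := by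
      ext y; simp [ih]
    have hsum : ∑ i ∈ Finset.range (n + 1),
        TensorProduct.map (M.iotaTerm c i) (M.iotaTerm c (n + 1 - 1 - i)) (Δ' x) =
        ∑ i ∈ Finset.range n,
          TensorProduct.map (M.iotaTerm c (i + 1)) (M.iotaTerm c (n - 1 - i)) (Δ' x) +
          TensorProduct.map (M.iotaTerm c 0) (M.iotaTerm c n) (Δ' x) := by
      rw [Finset.sum_range_succ']
      refine congrArg₂ _ (Finset.sum_congr rfl fun i _ => ?_) rfl
      rw [show n + 1 - 1 - (i + 1) = n - 1 - i by omega]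
    have hx : M.iotaTerm c (n + 1) x =
        TensorProduct.lift (M.cons ∘ₗ c) (lTensor H (M.iotaTerm c n) (Δ' x)) := by
      rw [iotaTerm_succ]; rfl
    have hlT (f : ℕ → H →ₗ[k] Q ⊗[k] Q) :
        lTensor H (∑ i ∈ Finset.range n, f i) = ∑ i ∈ Finset.range n, lTensor H (f i) :=
      map_sum (lTensorHom H) f _
    rw [hsum, hx, comul_lift_cons, ← comp_apply (lTensor H M.comul), ← lTensor_comp, ih',
      lTensor_add, lTensor_add, hlT, LinearMap.add_apply, LinearMap.add_apply, LinearMap.sum_apply,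
      map_add, map_add, map_sum]
    simp only [consLeft_lTensor_mk, consLeft_lTensor_flip_mk, consLeft_lTensor_map_redComul,
      ← iotaTerm_succ]
    abel

end Iota

end Words

namespace IotaComp

open Filter

variable {k : Type*} [Field k] {A : Type*} [Ring A] [Algebra k A]
  {Q : Type*} [AddCommGroup Q] [Module k Q] {M : QShModel k A Q}
  {H : Type*} [Ring H] [Bialgebra k H] {c : H →ₗ[k] A} {Ψ : H →ₗ[k] Q}

local notation "Δ" => Coalgebra.comul (R := k) (A := H)
local notation "ε" => Coalgebra.counit (R := k) (A := H)
local notation "Δ'" => redComul k (1 : H) (Coalgebra.comul (R := k) (A := H))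

theorem eventually_eq_sum (hΨ : M.IotaComp 1 Δ ε c Ψ) {x : H} (hx : ε x = 0) :
    ∀ᶠ n in atTop, Ψ x = ∑ i ∈ Finset.range n, M.iotaTerm c i x := by
  obtain ⟨N, hN⟩ := hΨ.2 x hx
  filter_upwards [eventually_gt_atTop N] with n hn
  obtain ⟨m, rfl⟩ : ∃ m, n = m + 1 := ⟨n - 1, by omega⟩
  exact hN m (by omega)

theorem eventually_iotaTerm_eq_zero (hΨ : M.IotaComp 1 Δ ε c Ψ) {x : H} (hx : ε x = 0) :
    ∀ᶠ n in atTop, M.iotaTerm c n x = 0 := by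
  have h := hΨ.eventually_eq_sum hx
  filter_upwards [h, (tendsto_add_atTop_nat 1).eventually h] with n hn hn1
  rw [Finset.sum_range_succ, ← hn] at hn1
  exact left_eq_add.mp hn1

theorem mem_nonemptyWords (hΨ : M.IotaComp 1 Δ ε c Ψ) {x : H} (hx : ε x = 0) :
    Ψ x ∈ M.nonemptyWords := by
  obtain ⟨n, hn⟩ := (hΨ.eventually_eq_sum hx).exists
  exact hn ▸ Submodule.sum_mem _ fun i _ => M.iotaTerm_mem_nonemptyWords c i x

theorem apply_mem (hΨ : M.IotaComp 1 Δ ε c Ψ) {V : Type*} [AddCommGroup V] [Module k V]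
    {f : Q →ₗ[k] V} {B : Submodule k V} (hf : ∀ a l, f (M.ofWord (a :: l)) ∈ B) {x : H}
    (hx : ε x = 0) : f (Ψ x) ∈ B :=
  M.map_nonemptyWords_le hf ⟨_, hΨ.mem_nonemptyWords hx, rfl⟩

theorem comp_eq {j : Q →ₗ[k] A} (hΨ : M.IotaComp 1 Δ ε c Ψ) (hj : M.IsJ j) (hc : c 1 = 1) :
    j ∘ₗ Ψ = c := by
  refine ext_of_apply_one (by rw [comp_apply, hΨ.1, hj.1, hc]) fun x hx => ?_
  obtain ⟨n, hn, hn1⟩ := ((hΨ.eventually_eq_sum hx).and (eventually_gt_atTop 0)).exists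
  have hlong : ∀ i ∈ Finset.range n, i ≠ 0 → j (M.iotaTerm c i x) = 0 := fun i _ hi => by
    obtain ⟨i, rfl⟩ := Nat.exists_eq_succ_of_ne_zero hi
    exact LinearMap.congr_fun (hj.comp_iotaTerm_succ c i) x
  rw [comp_apply, hn, map_sum, Finset.sum_eq_single_of_mem 0 (Finset.mem_range.mpr hn1) hlong,
    iotaTerm_zero_apply, hj.2.1]

theorem comul_comp (hΨ : M.IotaComp 1 Δ ε c Ψ) :
    M.comul ∘ₗ Ψ = TensorProduct.map Ψ Ψ ∘ₗ Δ := by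
  refine ext_of_apply_one ?_ fun x hx => ?_
  · simp [hΨ.1, M.comul_emp, Bialgebra.comul_one, Algebra.TensorProduct.one_def]
  obtain ⟨s, hs⟩ := redComul_mem_range_map_subtype hx
  have hlegs : ∀ᶠ n in atTop, TensorProduct.map Ψ Ψ (Δ' x) = ∑ i ∈ Finset.range n,
      ∑ d ∈ Finset.range i,
        TensorProduct.map (M.iotaTerm c d) (M.iotaTerm c (i - 1 - d)) (Δ' x) := by
    have hW (v : LinearMap.ker ε) :
        ∀ᶠ n in atTop, (M.iotaTerm c n ∘ₗ (LinearMap.ker ε).subtype) v = 0 :=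
      hΨ.eventually_iotaTerm_eq_zero v.2
    have hf (v : LinearMap.ker ε) : ∀ᶠ n in atTop, (Ψ ∘ₗ (LinearMap.ker ε).subtype) v =
        ∑ i ∈ Finset.range n, (M.iotaTerm c i ∘ₗ (LinearMap.ker ε).subtype) v :=
      hΨ.eventually_eq_sum v.2
    simpa only [← hs, ← comp_apply, ← TensorProduct.map_comp] using
      eventually_map_eq_sum_range_sum_range hW hW hf hf s
  obtain ⟨n, hn, hΨn⟩ := (hlegs.and (hΨ.eventually_eq_sum hx)).exists
  have hΔ : Δ x = 1 ⊗ₜ x + x ⊗ₜ 1 + Δ' x := by rw [redComul_apply]; abel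
  rw [comp_apply, comp_apply, hΨn, map_sum,
    Finset.sum_congr rfl fun i _ => M.comul_iotaTerm c i x, Finset.sum_add_distrib,
    Finset.sum_add_distrib, ← TensorProduct.tmul_sum, ← TensorProduct.sum_tmul, ← hΨn, hΔ,
    map_add, map_add, TensorProduct.map_tmul, TensorProduct.map_tmul, hΨ.1, hn]

end IotaComp

end QShModel

end QShPaper

open QShPaper in
theorem stmt19_birkhoff_via_action_general
    (k : Type*) [Field k]
    (H : Type*) [Ring H] [Bialgebra k H]
    (hconil : IsConilpotent k (1 : H) (Coalgebra.comul (R := k) (A := H))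
      (Coalgebra.counit (R := k) (A := H)))
    (A : Type*) [Ring A] [Algebra k A]
    (p : A →ₗ[k] A) (hidem : p ∘ₗ p = p)
    (Q : Type*) [AddCommGroup Q] [Module k Q]
    (M : QShModel k A Q) (j : Q →ₗ[k] A) (hj : M.IsJ j)
    -- `(j₊, j₋)`, given by the explicit word formulas
    (jp jm : Q →ₗ[k] A)
    (hjp1 : jp M.emp = 1)
    (hjp : ∀ (a : A) (l : List A),
      jp (M.ofWord (a :: l)) =
        ((-1 : k)) ^ l.length • p (rbChain' ((LinearMap.id : A →ₗ[k] A) - p) a l))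
    (hjm1 : jm M.emp = 1)
    (hjm : ∀ (a : A) (l : List A),
      jm (M.ofWord (a :: l)) =
        ((-1 : k)) ^ (l.length + 1) •
          ((LinearMap.id : A →ₗ[k] A) - p) (rbChain' ((LinearMap.id : A →ₗ[k] A) - p) a l))
    (φ : H →ₗ[k] A) (hφ1 : φ 1 = 1)
    -- `Ψ = QSh(φ|_{H⁺}) ∘ ι`
    (Ψ : H →ₗ[k] Q)
    (hΨ : M.IotaComp (1 : H) (Coalgebra.comul (R := k) (A := H))
      (Coalgebra.counit (R := k) (A := H)) φ Ψ) :
    -- `φ₊ = j₊ ⊙ φ ∈ U(H, A₊)` and `φ₋ = j₋ ⊙ φ ∈ U(H, A₋)`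
    ((jp ∘ₗ Ψ) 1 = 1) ∧
    ((jm ∘ₗ Ψ) 1 = 1) ∧
    (∀ h ∈ LinearMap.ker (Coalgebra.counit (R := k) (A := H)),
      (jp ∘ₗ Ψ) h ∈ LinearMap.range p) ∧
    (∀ h ∈ LinearMap.ker (Coalgebra.counit (R := k) (A := H)),
      (jm ∘ₗ Ψ) h ∈ LinearMap.range ((LinearMap.id : A →ₗ[k] A) - p)) ∧
    -- `φ₋ * φ = φ₊`
    conv k A (Coalgebra.comul (R := k) (A := H)) (jm ∘ₗ Ψ) φ = jp ∘ₗ Ψ ∧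
    -- uniqueness: `(φ₊, φ₋)` is *the* Birkhoff decomposition of `φ`
    (∀ ψp ψm : H →ₗ[k] A,
      ψp 1 = 1 → ψm 1 = 1 →
      (∀ h ∈ LinearMap.ker (Coalgebra.counit (R := k) (A := H)),
        ψp h ∈ LinearMap.range p) →
      (∀ h ∈ LinearMap.ker (Coalgebra.counit (R := k) (A := H)),
        ψm h ∈ LinearMap.range ((LinearMap.id : A →ₗ[k] A) - p)) →
      conv k A (Coalgebra.comul (R := k) (A := H)) ψm φ = ψp →
      ψp = jp ∘ₗ Ψ ∧ ψm = jm ∘ₗ Ψ) := by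
  have hjΨ : j ∘ₗ Ψ = φ := hΨ.comp_eq hj hφ1
  have hconv : conv k A Coalgebra.comul (jm ∘ₗ Ψ) φ = jp ∘ₗ Ψ := by
    rw [← hjΨ, conv_comp_comp hΨ.comul_comp,
      M.conv_eq_of_birkhoff_formulas hj p hjp1 hjp hjm1 hjm]
  have hjpΨ (h : H) (hh : h ∈ LinearMap.ker (Coalgebra.counit (R := k) (A := H))) :
      (jp ∘ₗ Ψ) h ∈ LinearMap.range p :=
    hΨ.apply_mem (fun a l => hjp a l ▸ Submodule.smul_mem _ _ (LinearMap.mem_range_self _ _)) hh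
  have hjmΨ (h : H) (hh : h ∈ LinearMap.ker (Coalgebra.counit (R := k) (A := H))) :
      (jm ∘ₗ Ψ) h ∈ LinearMap.range ((LinearMap.id : A →ₗ[k] A) - p) :=
    hΨ.apply_mem (fun a l => hjm a l ▸ Submodule.smul_mem _ _ (LinearMap.mem_range_self _ _)) hh
  have hjm1Ψ : (jm ∘ₗ Ψ) 1 = 1 := by rw [LinearMap.comp_apply, hΨ.1, hjm1]
  refine ⟨by rw [LinearMap.comp_apply, hΨ.1, hjp1], hjm1Ψ, hjpΨ, hjmΨ, hconv,
    fun ψp ψm _ hψm1 hψp hψm hψ => ?_⟩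
  have hψm : ψm = jm ∘ₗ Ψ :=
    birkhoff_factor_unique hconil hidem hφ1 hψm1 hjm1Ψ hψp hjpΨ hψm hjmΨ hψ hconv
  exact ⟨hψ ▸ hψm ▸ hconv, hψm⟩

open QShPaper in
/-- Let `H` be a conilpotent bialgebra, `(A, p₊)` an idempotent
Rota–Baxter algebra of weight `−1`, and `φ ∈ U(H,A)`. With `(j₊, j₋)` the Birkhoff
decomposition of the universal element `j` (given by the explicit word formulas below) and
`Ψ = QSh(φ|_{H⁺}) ∘ ι`, the maps `φ₊ := j₊ ⊙ φ = j₊ ∘ₗ Ψ` and `φ₋ := j₋ ⊙ φ = j₋ ∘ₗ Ψ`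
satisfy `φ₋ * φ = φ₊`, `φ₊ ∈ U(H, A₊)`, `φ₋ ∈ U(H, A₋)`: they form the unique Birkhoff
decomposition of `φ`. -/
theorem stmt19_birkhoff_via_action
    (k : Type*) [Field k] [CharZero k]
    (H : Type*) [Ring H] [Bialgebra k H]
    (hconil : IsConilpotent k (1 : H) (Coalgebra.comul (R := k) (A := H))
      (Coalgebra.counit (R := k) (A := H)))
    (A : Type*) [Ring A] [Algebra k A]
    (p : A →ₗ[k] A) (hidem : p ∘ₗ p = p)
    (hRB : ∀ x y : A, p x * p y = p (x * p y) + p (p x * y) - p (x * y))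
    (Q : Type*) [AddCommGroup Q] [Module k Q]
    (M : QShModel k A Q) (j : Q →ₗ[k] A) (hj : M.IsJ j)
    -- `(j₊, j₋)`, given by the explicit word formulas
    (jp jm : Q →ₗ[k] A)
    (hjp1 : jp M.emp = 1)
    (hjp : ∀ (a : A) (l : List A),
      jp (M.ofWord (a :: l)) =
        ((-1 : k)) ^ l.length • p (rbChain' ((LinearMap.id : A →ₗ[k] A) - p) a l))
    (hjm1 : jm M.emp = 1)
    (hjm : ∀ (a : A) (l : List A),
      jm (M.ofWord (a :: l)) =
        ((-1 : k)) ^ (l.length + 1) •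
          ((LinearMap.id : A →ₗ[k] A) - p) (rbChain' ((LinearMap.id : A →ₗ[k] A) - p) a l))
    (φ : H →ₗ[k] A) (hφ1 : φ 1 = 1)
    -- `Ψ = QSh(φ|_{H⁺}) ∘ ι`
    (Ψ : H →ₗ[k] Q)
    (hΨ : M.IotaComp (1 : H) (Coalgebra.comul (R := k) (A := H))
      (Coalgebra.counit (R := k) (A := H)) φ Ψ) :
    -- `φ₊ = j₊ ⊙ φ ∈ U(H, A₊)` and `φ₋ = j₋ ⊙ φ ∈ U(H, A₋)`
    ((jp ∘ₗ Ψ) 1 = 1) ∧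
    ((jm ∘ₗ Ψ) 1 = 1) ∧
    (∀ h ∈ LinearMap.ker (Coalgebra.counit (R := k) (A := H)),
      (jp ∘ₗ Ψ) h ∈ LinearMap.range p) ∧
    (∀ h ∈ LinearMap.ker (Coalgebra.counit (R := k) (A := H)),
      (jm ∘ₗ Ψ) h ∈ LinearMap.range ((LinearMap.id : A →ₗ[k] A) - p)) ∧
    -- `φ₋ * φ = φ₊`
    conv k A (Coalgebra.comul (R := k) (A := H)) (jm ∘ₗ Ψ) φ = jp ∘ₗ Ψ ∧
    -- uniqueness: `(φ₊, φ₋)` is *the* Birkhoff decomposition of `φ`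
    (∀ ψp ψm : H →ₗ[k] A,
      ψp 1 = 1 → ψm 1 = 1 →
      (∀ h ∈ LinearMap.ker (Coalgebra.counit (R := k) (A := H)),
        ψp h ∈ LinearMap.range p) →
      (∀ h ∈ LinearMap.ker (Coalgebra.counit (R := k) (A := H)),
        ψm h ∈ LinearMap.range ((LinearMap.id : A →ₗ[k] A) - p)) →
      conv k A (Coalgebra.comul (R := k) (A := H)) ψm φ = ψp →
      ψp = jp ∘ₗ Ψ ∧ ψm = jm ∘ₗ Ψ) :=
  stmt19_birkhoff_via_action_general k H hconil A p hidem Q M j hj jp jm hjp1 hjp hjm1 hjm φ hφ1 Ψ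
    hΨ
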